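/- arXiv:2411.15137 — 3 statements merged into one kernel-verified Lean document; each statement's English description precedes it below -/
import Mathlib

section
/- Let S ⊆ [n] with |S| ≥ 1 and 1 ≤ k ≤ |S|. Let ν be the distribution on [3]^n obtained by: sampling a uniformly random subset T ⊆ S with |T| = k, sampling a uniformly random x ∈ [3] and a uniformly random y ∈ [3]^{[n]∖T}, and forming v ∈ [3]^n with v_t = x for t ∈ T and v_i = y_i otherwise. Then the total variation distance between ν and the uniform distribution on [3]^n is at most 10k/√|S|. -/
/-!
Write p for the density of ν. By Cauchy–Schwarz, (∑ᵥ |p v - 3⁻ⁿ|)² ≤ 3ⁿ ∑ᵥ p v² - 1, and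
expanding p² over pairs (T, T') the right side is controlled by the number of vectors constant on
both T and T'. Such a vector is fixed by two values and its restriction off T ∪ T', so the pair
contributes at most 3^|T ∩ T'|. Expanding 3^|T ∩ T'| = ∑_{U ⊆ T ∩ T'} 2^|U| and counting the
k-sets T' ⊇ U gives an average of at most (1 + 2k/|S|)^k ≤ exp (2k²/|S|) over the pairs, hence a
χ²-distance of at most exp (2k²/|S|) - 1. Combined with the trivial bound 2 on the ℓ¹ distance
this puts the total variation distance below √2 · k / √|S|.
-/

open Finset

theorem Nat.descFactorial_mul_pow_le {k s : ℕ} (hks : k ≤ s) (j : ℕ) :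
    k.descFactorial j * s ^ j ≤ s.descFactorial j * k ^ j := by
  induction j with
  | zero => simp
  | succ j ih =>
    have hstep : (k - j) * s ≤ (s - j) * k := by
      rw [Nat.sub_mul, Nat.sub_mul, mul_comm s k]
      exact Nat.sub_le_sub_left (Nat.mul_le_mul_left j hks) _
    calc k.descFactorial (j + 1) * s ^ (j + 1)
        = k.descFactorial j * s ^ j * ((k - j) * s) := by
          rw [Nat.descFactorial_succ, pow_succ]; ring
      _ ≤ s.descFactorial j * k ^ j * ((s - j) * k) := Nat.mul_le_mul ih hstep
      _ = s.descFactorial (j + 1) * k ^ (j + 1) := by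
          rw [Nat.descFactorial_succ, pow_succ]; ring

theorem Nat.choose_sub_mul_pow_le {j k s : ℕ} (hjk : j ≤ k) (hks : k ≤ s) :
    (s - j).choose (k - j) * s ^ j ≤ s.choose k * k ^ j := by
  have hchoose : s.choose k * k.descFactorial j = s.descFactorial j * (s - j).choose (k - j) := by
    rw [Nat.descFactorial_eq_factorial_mul_choose, Nat.descFactorial_eq_factorial_mul_choose,
      mul_left_comm, Nat.choose_mul hjk, mul_assoc]
  refine Nat.le_of_mul_le_mul_left ?_ (Nat.descFactorial_pos.2 (hjk.trans hks))
  calc s.descFactorial j * ((s - j).choose (k - j) * s ^ j)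
      = s.choose k * (k.descFactorial j * s ^ j) := by rw [← mul_assoc, ← hchoose, mul_assoc]
    _ ≤ s.choose k * (s.descFactorial j * k ^ j) :=
        Nat.mul_le_mul_left _ (Nat.descFactorial_mul_pow_le hks j)
    _ = s.descFactorial j * (s.choose k * k ^ j) := by ring

theorem Nat.cast_choose_sub_le_mul_div_pow {j k s : ℕ} (hjk : j ≤ k) (hks : k ≤ s) :
    ((s - j).choose (k - j) : ℝ) ≤ s.choose k * ((k : ℝ) / s) ^ j := by
  rcases j.eq_zero_or_pos with rfl | hj
  · simp
  have hs : (0 : ℝ) < s := by exact_mod_cast hj.trans_le (hjk.trans hks)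
  rw [div_pow, mul_div_assoc', le_div_iff₀ (pow_pos hs j)]
  exact_mod_cast Nat.choose_sub_mul_pow_le hjk hks

section PowersetCard

variable {ι : Type*} [DecidableEq ι]

theorem sum_powersetCard_pow_card_inter_le {S T : Finset ι} {k : ℕ}
    (hT : T ∈ S.powersetCard k) {b : ℝ} (hb : 0 ≤ b) :
    ∑ T' ∈ S.powersetCard k, (1 + b) ^ #(T ∩ T') ≤ (#S).choose k * (1 + b * k / #S) ^ k := by
  obtain ⟨hTS, hTk⟩ := mem_powersetCard.1 hT
  have hbinom : ∀ T', (1 + b) ^ #(T ∩ T') = ∑ U ∈ T.powerset, if U ⊆ T' then b ^ #U else 0 := by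
    intro T'
    rw [← sum_filter, add_comm, ← sum_pow_mul_eq_add_pow]
    refine sum_congr ?_ fun U _ => by simp
    ext U
    simp only [mem_filter, mem_powerset, subset_inter_iff]
  calc ∑ T' ∈ S.powersetCard k, (1 + b) ^ #(T ∩ T')
      = ∑ U ∈ T.powerset, b ^ #U * ((#S - #U).choose (k - #U) : ℝ) := by
        simp_rw [hbinom]
        rw [sum_comm]
        refine sum_congr rfl fun U hU => ?_
        have hUT := mem_powerset.1 hU
        rw [← sum_filter, sum_const, nsmul_eq_mul, mul_comm,
          card_filter_powersetCard_subset U S k (hUT.trans hTS) (hTk ▸ card_le_card hUT)]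
    _ ≤ ∑ U ∈ T.powerset, b ^ #U * ((#S).choose k * ((k : ℝ) / #S) ^ #U) := by
        refine sum_le_sum fun U hU => mul_le_mul_of_nonneg_left ?_ (pow_nonneg hb _)
        exact Nat.cast_choose_sub_le_mul_div_pow (hTk ▸ card_le_card (mem_powerset.1 hU))
          (hTk ▸ card_le_card hTS)
    _ = (#S).choose k * (1 + b * k / #S) ^ k := by
        rw [← hTk, add_comm 1, ← sum_pow_mul_eq_add_pow, mul_sum]
        refine sum_congr rfl fun U _ => ?_
        rw [one_pow, mul_one, mul_div_assoc, mul_pow]; ring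

end PowersetCard

section Counting

variable {ι α : Type*} [Fintype ι] [DecidableEq ι] [Fintype α] [DecidableEq α]

theorem card_filter_forall_mem_eq (A : Finset ι) (φ : ι → α) :
    #{v : ι → α | ∀ i ∈ A, v i = φ i} = Fintype.card α ^ (Fintype.card ι - #A) := by
  have : ({v : ι → α | ∀ i ∈ A, v i = φ i} : Finset (ι → α)) =
      Fintype.piFinset fun i => if i ∈ A then {φ i} else univ := by
    ext v
    simp only [mem_filter, mem_univ, true_and, Fintype.mem_piFinset]
    refine forall_congr' fun i => ?_
    split_ifs with hi <;> simp [hi]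
  rw [this, Fintype.card_piFinset]
  simp [apply_ite, prod_ite, filter_not, card_univ_sdiff]

theorem card_filter_exists_forall_mem_eq {T : Finset ι} (hT : T.Nonempty) :
    #{v : ι → α | ∃ x, ∀ t ∈ T, v t = x} =
      Fintype.card α * Fintype.card α ^ (Fintype.card ι - #T) := by
  obtain ⟨t₀, ht₀⟩ := hT
  have : ({v : ι → α | ∃ x, ∀ t ∈ T, v t = x} : Finset (ι → α)) =
      univ.biUnion fun x => {v | ∀ t ∈ T, v t = x} := by
    ext v; simp
  rw [this, card_biUnion, sum_congr rfl fun x _ => card_filter_forall_mem_eq T fun _ => x,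
    sum_const, card_univ, smul_eq_mul]
  intro x _ y _ hxy
  refine disjoint_filter.2 fun v _ hx hy => hxy ?_
  rw [← hx t₀ ht₀, hy t₀ ht₀]

theorem card_filter_exists_forall_mem_and_le (T T' : Finset ι) :
    #{v : ι → α | (∃ x, ∀ t ∈ T, v t = x) ∧ ∃ x, ∀ t ∈ T', v t = x} ≤
      Fintype.card α ^ 2 * Fintype.card α ^ (Fintype.card ι - #(T ∪ T')) := by
  have : ({v : ι → α | (∃ x, ∀ t ∈ T, v t = x) ∧ ∃ x, ∀ t ∈ T', v t = x} : Finset (ι → α)) ⊆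
      (univ : Finset (α × α)).biUnion fun p =>
        {v | ∀ t ∈ T ∪ T', v t = if t ∈ T then p.1 else p.2} := by
    intro v hv
    simp only [mem_filter, mem_univ, true_and] at hv
    obtain ⟨⟨x, hx⟩, x', hx'⟩ := hv
    simp only [mem_biUnion, mem_univ, mem_filter, true_and, mem_union, Prod.exists]
    refine ⟨x, x', fun t ht => ?_⟩
    split_ifs with htT
    · exact hx t htT
    · exact hx' t (ht.resolve_left htT)
  refine (card_le_card this).trans (card_biUnion_le.trans ?_)
  rw [sum_congr rfl fun p _ => card_filter_forall_mem_eq _ _, sum_const, card_univ,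
    Fintype.card_prod, smul_eq_mul, sq]

end Counting

section Density

variable {ι α : Type*} [Fintype ι] [DecidableEq ι] [Fintype α] [DecidableEq α]

/-- The probability of `v` under ν: given `T`, a vector constant on `T` is drawn with probability
`|α|⁻¹ · |α|^-(|ι| - k)`. -/
noncomputable def constOnDensity (S : Finset ι) (k : ℕ) (v : ι → α) : ℝ :=
  ((#S).choose k : ℝ)⁻¹ * ∑ T ∈ S.powersetCard k,
    if ∃ x, ∀ t ∈ T, v t = x then ((Fintype.card α : ℝ) ^ (Fintype.card ι - k + 1))⁻¹ else 0

theorem constOnDensity_nonneg (S : Finset ι) (k : ℕ) (v : ι → α) : 0 ≤ constOnDensity S k v := by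
  unfold constOnDensity
  positivity

theorem sum_constOnDensity [Nonempty α] {S : Finset ι} {k : ℕ} (hk1 : 1 ≤ k) (hk : k ≤ #S) :
    ∑ v : ι → α, constOnDensity S k v = 1 := by
  have hq : (0 : ℝ) < Fintype.card α := by exact_mod_cast Fintype.card_pos
  have hC : ((#S).choose k : ℝ) ≠ 0 := by exact_mod_cast (Nat.choose_pos hk).ne'
  have hT : ∀ T ∈ S.powersetCard k, ∑ v : ι → α,
      (if ∃ x, ∀ t ∈ T, v t = x then ((Fintype.card α : ℝ) ^ (Fintype.card ι - k + 1))⁻¹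
        else 0) = 1 := by
    intro T hT
    obtain ⟨-, hTk⟩ := mem_powersetCard.1 hT
    rw [sum_ite, sum_const_zero, add_zero, sum_const, nsmul_eq_mul,
      card_filter_exists_forall_mem_eq (card_pos.1 (hTk ▸ hk1)), hTk]
    push_cast
    rw [← pow_succ', mul_inv_cancel₀ (pow_ne_zero _ hq.ne')]
  simp_rw [constOnDensity, ← mul_sum]
  rw [sum_comm, sum_congr rfl hT, sum_const, card_powersetCard, nsmul_one, inv_mul_cancel₀ hC]

theorem pow_card_mul_inv_pow_sq_mul_card_filter_le [Nonempty α] {T T' : Finset ι} {k : ℕ}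
    (hT : #T = k) (hT' : #T' = k) :
    (Fintype.card α : ℝ) ^ Fintype.card ι * ((Fintype.card α : ℝ) ^ (Fintype.card ι - k + 1))⁻¹ ^ 2
        * #{v : ι → α | (∃ x, ∀ t ∈ T, v t = x) ∧ ∃ x, ∀ t ∈ T', v t = x}
      ≤ (Fintype.card α : ℝ) ^ #(T ∩ T') := by
  have hcount : (#{v : ι → α | (∃ x, ∀ t ∈ T, v t = x) ∧ ∃ x, ∀ t ∈ T', v t = x} : ℝ) ≤
      (Fintype.card α : ℝ) ^ 2 * (Fintype.card α : ℝ) ^ (Fintype.card ι - #(T ∪ T')) := by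
    exact_mod_cast card_filter_exists_forall_mem_and_le T T'
  have hexp : Fintype.card ι + (2 + (Fintype.card ι - #(T ∪ T'))) =
      #(T ∩ T') + (Fintype.card ι - k + 1) * 2 := by
    have := card_union_add_card_inter T T'
    have := card_le_univ (T ∪ T')
    have := card_le_univ T
    omega
  set q : ℝ := (Fintype.card α : ℝ)
  calc q ^ Fintype.card ι * (q ^ (Fintype.card ι - k + 1))⁻¹ ^ 2
        * #{v : ι → α | (∃ x, ∀ t ∈ T, v t = x) ∧ ∃ x, ∀ t ∈ T', v t = x}
      ≤ q ^ Fintype.card ι * (q ^ (Fintype.card ι - k + 1))⁻¹ ^ 2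
        * (q ^ 2 * q ^ (Fintype.card ι - #(T ∪ T'))) := by gcongr
    _ = q ^ #(T ∩ T') := by
        rw [inv_pow, ← pow_mul, ← pow_add, mul_right_comm, ← pow_add, hexp, pow_add,
          mul_inv_cancel_right₀ (by positivity)]

theorem pow_card_mul_sum_constOnDensity_sq_le [Nonempty α] {S : Finset ι} {k : ℕ}
    (hk : k ≤ #S) :
    (Fintype.card α : ℝ) ^ Fintype.card ι * ∑ v : ι → α, constOnDensity S k v ^ 2
      ≤ (1 + (Fintype.card α - 1) * k / #S) ^ k := by
  have hC : (0 : ℝ) < (#S).choose k := by exact_mod_cast Nat.choose_pos hk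
  have hq1 : (0 : ℝ) ≤ Fintype.card α - 1 := sub_nonneg.2 (Nat.one_le_cast.2 Fintype.card_pos)
  set q : ℝ := (Fintype.card α : ℝ)
  set w : ℝ := (q ^ (Fintype.card ι - k + 1))⁻¹
  set P := S.powersetCard k
  have hsq : ∀ v : ι → α, constOnDensity S k v ^ 2 = ((#S).choose k : ℝ)⁻¹ ^ 2 *
      ∑ T ∈ P, ∑ T' ∈ P,
        if (∃ x, ∀ t ∈ T, v t = x) ∧ ∃ x, ∀ t ∈ T', v t = x then w ^ 2 else 0 := by
    intro v
    rw [constOnDensity, mul_pow, sq (∑ T ∈ P, _), sum_mul_sum]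
    simp_rw [ite_zero_mul_ite_zero, ← sq]
    rfl
  have hpair : ∀ T ∈ P, ∀ T' ∈ P, q ^ Fintype.card ι * ∑ v : ι → α,
      (if (∃ x, ∀ t ∈ T, v t = x) ∧ ∃ x, ∀ t ∈ T', v t = x then w ^ 2 else 0)
        ≤ (1 + (q - 1)) ^ #(T ∩ T') := by
    intro T hT T' hT'
    rw [sum_ite, sum_const_zero, add_zero, sum_const, nsmul_eq_mul, add_sub_cancel]
    calc q ^ Fintype.card ι * (_ * w ^ 2) = q ^ Fintype.card ι * w ^ 2 * _ := by ring
      _ ≤ _ := pow_card_mul_inv_pow_sq_mul_card_filter_le (mem_powersetCard.1 hT).2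
          (mem_powersetCard.1 hT').2
  calc q ^ Fintype.card ι * ∑ v : ι → α, constOnDensity S k v ^ 2
      = ((#S).choose k : ℝ)⁻¹ ^ 2 * ∑ T ∈ P, ∑ T' ∈ P, q ^ Fintype.card ι * ∑ v : ι → α,
          (if (∃ x, ∀ t ∈ T, v t = x) ∧ ∃ x, ∀ t ∈ T', v t = x then w ^ 2 else 0) := by
        simp_rw [hsq, ← mul_sum]
        rw [sum_comm]
        simp_rw [sum_comm (γ := ι → α)]
        ring
    _ ≤ ((#S).choose k : ℝ)⁻¹ ^ 2 * ∑ T ∈ P, ∑ T' ∈ P, (1 + (q - 1)) ^ #(T ∩ T') := by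
        gcongr with T hT T' hT'
        exact hpair T hT T' hT'
    _ ≤ ((#S).choose k : ℝ)⁻¹ ^ 2 * ∑ T ∈ P, (#S).choose k * (1 + (q - 1) * k / #S) ^ k := by
        gcongr with T hT
        exact sum_powersetCard_pow_card_inter_le hT hq1
    _ = (1 + (q - 1) * k / #S) ^ k := by
        rw [sum_const, card_powersetCard, nsmul_eq_mul]
        field_simp

end Density

section TotalVariation

variable {β : Type*} [Fintype β] [Nonempty β]

theorem sum_abs_sub_inv_card_le_two {p : β → ℝ} (hp0 : ∀ v, 0 ≤ p v) (hp1 : ∑ v, p v = 1) :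
    ∑ v, |p v - (Fintype.card β : ℝ)⁻¹| ≤ 2 := by
  have hN : (Fintype.card β : ℝ) ≠ 0 := by positivity
  calc ∑ v, |p v - (Fintype.card β : ℝ)⁻¹| ≤ ∑ v, (p v + (Fintype.card β : ℝ)⁻¹) := by
        refine sum_le_sum fun v _ => (abs_sub _ _).trans_eq ?_
        rw [abs_of_nonneg (hp0 v), abs_of_nonneg (by positivity)]
    _ = 2 := by
        rw [sum_add_distrib, hp1, sum_const, card_univ, nsmul_eq_mul, mul_inv_cancel₀ hN]
        norm_num

theorem sq_sum_abs_sub_inv_card_le {p : β → ℝ} (hp1 : ∑ v, p v = 1) :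
    (∑ v, |p v - (Fintype.card β : ℝ)⁻¹|) ^ 2 ≤ Fintype.card β * ∑ v, p v ^ 2 - 1 := by
  have hN : (Fintype.card β : ℝ) ≠ 0 := by positivity
  calc (∑ v, |p v - (Fintype.card β : ℝ)⁻¹|) ^ 2
      ≤ #(univ : Finset β) * ∑ v, |p v - (Fintype.card β : ℝ)⁻¹| ^ 2 := sq_sum_le_card_mul_sum_sq
    _ = Fintype.card β * ∑ v, p v ^ 2 - 1 := by
        simp_rw [sq_abs, sub_sq, sum_add_distrib, sum_sub_distrib, ← sum_mul, ← mul_sum, hp1,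
          sum_const, card_univ, nsmul_eq_mul]
        field_simp
        ring

end TotalVariation

theorem sq_le_four_mul_of_sq_le_exp_sub_one {D y : ℝ} (hD0 : 0 ≤ D) (hD2 : D ≤ 2) (hy : 0 ≤ y)
    (h : D ^ 2 ≤ Real.exp y - 1) : D ^ 2 ≤ 4 * y := by
  rcases le_or_gt y 1 with hy1 | hy1
  · have := Real.abs_exp_sub_one_le (x := y) (by rwa [abs_of_nonneg hy])
    rw [abs_of_nonneg hy] at this
    linarith [le_abs_self (Real.exp y - 1)]
  · nlinarith

theorem half_sum_abs_constOnDensity_sub_le {ι α : Type*} [Fintype ι] [DecidableEq ι] [Fintype α]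
    [DecidableEq α] [Nonempty α] {S : Finset ι} {k : ℕ} (hk1 : 1 ≤ k) (hk : k ≤ #S) :
    1 / 2 * ∑ v : ι → α, |constOnDensity S k v - (Fintype.card (ι → α) : ℝ)⁻¹|
      ≤ Real.sqrt ((Fintype.card α - 1) / #S) * k := by
  have hq1 : (0 : ℝ) ≤ Fintype.card α - 1 := sub_nonneg.2 (Nat.one_le_cast.2 Fintype.card_pos)
  set D := ∑ v : ι → α, |constOnDensity S k v - (Fintype.card (ι → α) : ℝ)⁻¹|
  set y : ℝ := (Fintype.card α - 1) / #S * k ^ 2 with hy_def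
  have hy : 0 ≤ y := by positivity
  have hsum := sum_constOnDensity (α := α) hk1 hk
  have hD0 : 0 ≤ D := sum_nonneg fun v _ => abs_nonneg _
  have hD2 : D ≤ 2 := sum_abs_sub_inv_card_le_two (constOnDensity_nonneg S k) hsum
  have hchi : D ^ 2 ≤ Real.exp y - 1 :=
    calc D ^ 2 ≤ Fintype.card (ι → α) * ∑ v : ι → α, constOnDensity S k v ^ 2 - 1 :=
          sq_sum_abs_sub_inv_card_le hsum
      _ ≤ (1 + (Fintype.card α - 1) * k / #S) ^ k - 1 := by
          rw [Fintype.card_fun, Nat.cast_pow]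
          linarith [pow_card_mul_sum_constOnDensity_sq_le (α := α) hk]
      _ ≤ Real.exp ((Fintype.card α - 1) * k / #S) ^ k - 1 := by
          gcongr
          linarith [Real.add_one_le_exp ((Fintype.card α - 1) * k / #S)]
      _ = Real.exp y - 1 := by
          rw [hy_def, ← Real.exp_nat_mul]; ring_nf
  have hDy := sq_le_four_mul_of_sq_le_exp_sub_one hD0 hD2 hy hchi
  rw [← Real.sqrt_sq (by positivity : (0 : ℝ) ≤ k), ← Real.sqrt_mul (by positivity)]
  apply Real.le_sqrt_of_sq_le
  linarith

theorem stmt1_general (n k : ℕ) (S : Finset (Fin n))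
    (hk1 : 1 ≤ k) (hk : k ≤ S.card) :
    (1 / 2) * ∑ v : Fin n → Fin 3,
      |((S.card.choose k : ℝ))⁻¹ *
          (∑ T ∈ S.powersetCard k,
            (if ∃ x : Fin 3, ∀ t ∈ T, v t = x then ((3 : ℝ) ^ (n - k + 1))⁻¹ else 0))
        - ((3 : ℝ) ^ n)⁻¹|
      ≤ 10 * k / Real.sqrt S.card := by
  have hs : (0 : ℝ) < Real.sqrt S.card := Real.sqrt_pos.2 (by exact_mod_cast hk1.trans hk)
  have htv := half_sum_abs_constOnDensity_sub_le (α := Fin 3) hk1 hk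
  simp only [constOnDensity, Fintype.card_fin, Fintype.card_fun, Nat.cast_pow, Nat.cast_ofNat]
    at htv
  refine htv.trans ?_
  rw [Real.sqrt_div' _ (Nat.cast_nonneg _), le_div_iff₀ hs, div_mul_eq_mul_div,
    div_mul_cancel₀ _ hs.ne']
  have : Real.sqrt (3 - 1) ≤ 10 := by
    rw [Real.sqrt_le_left] <;> norm_num
  nlinarith

/-- the distribution obtained by choosing a uniformly random k-subset T of S,
a uniform x ∈ [3] and uniform values on the other coordinates, and setting all coordinates
of T equal to x, is within total variation distance 10k/√|S| of the uniform distribution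
on [3]^n. -/
theorem stmt1 (n k : ℕ) (S : Finset (Fin n)) (hS : 1 ≤ S.card)
    (hk1 : 1 ≤ k) (hk : k ≤ S.card) :
    (1 / 2) * ∑ v : Fin n → Fin 3,
      |((S.card.choose k : ℝ))⁻¹ *
          (∑ T ∈ S.powersetCard k,
            (if ∃ x : Fin 3, ∀ t ∈ T, v t = x then ((3 : ℝ) ^ (n - k + 1))⁻¹ else 0))
        - ((3 : ℝ) ^ n)⁻¹|
      ≤ 10 * k / Real.sqrt S.card :=
  stmt1_general n k S hk1 hk
end

section
/- If a 1-bounded function f: Σ^n → ℂ satisfies |E_{x∼μ^⊗n}[f(x)·P(x)]| ≥ ε for some 1-bounded product function P, and μ = β·μ' + (1−β)·ν for distributions μ', ν on Σ, then with probability at least ε/2 over choosing I ⊆ [n] by including each coordinate independently with probability 1−β and z ∼ ν^⊗I, the restricted function satisfies |E_{x∼(μ')^⊗(complement of I)}[f_{I→z}(x)·P_{I→z}(x)]| ≥ ε/2. -/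
/-!
Expanding every factor of `μ^⊗n = (β μ' + (1 - β) ν)^⊗n` writes `μ^⊗n` as the mixture, over
`I ∼ (1 - β)`-biased and `z ∼ ν^⊗I`, of `δ_z ⊗ (μ')^⊗Iᶜ`. As `P` is a product, the correlation of
`f` with `P` is then the average of `P_I(z)` times the restricted correlations `c(I, z)`, so
`ε ≤ E |c(I, z)|`. Since `|c(I, z)| ≤ 1`, we have `E |c| ≤ ε / 2 + Pr[|c| ≥ ε / 2]`.
-/

open Finset

section ProductSums
variable {ι Γ R M : Type*} [DecidableEq ι]

theorem piecewise_swap_involutive (I : Finset ι) :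
    Function.Involutive fun p : (ι → Γ) × (ι → Γ) =>
      (I.piecewise p.1 p.2, I.piecewise p.2 p.1) := by
  intro p
  simp [piecewise_same]

variable [Fintype ι]

theorem sum_sum_prod_mul_prod_smul_piecewise [Fintype Γ] [CommSemiring R] [AddCommMonoid M]
    [Module R M] (I : Finset ι) (a b : ι → Γ → R) (F : (ι → Γ) → M) :
    ∑ z, ∑ x, ((∏ i, a i (z i)) * ∏ i, b i (x i)) • F (I.piecewise z x) =
      ∑ u, (∏ i, if i ∈ I then a i (u i) * ∑ s, b i s else b i (u i) * ∑ s, a i s) • F u := by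
  -- after exchanging `z` and `x` on `I`, the sum over the discarded coordinates factors
  rw [← Fintype.sum_prod_type', ← Equiv.sum_comp ((piecewise_swap_involutive I).toPerm _),
    Fintype.sum_prod_type]
  refine sum_congr rfl fun u _ => ?_
  simp only [Function.Involutive.coe_toPerm, piecewise_idem_left, piecewise_idem_right,
    piecewise_same, ← sum_smul, ← prod_mul_distrib]
  congr 1
  let g : ∀ i, Γ → R := fun i s => if i ∈ I then a i (u i) * b i s else a i s * b i (u i)
  calc ∑ v, ∏ i, a i (I.piecewise u v i) * b i (I.piecewise v u i)
      = ∑ v : ι → Γ, ∏ i, g i (v i) := by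
        refine sum_congr rfl fun v _ => prod_congr rfl fun i _ => ?_
        by_cases hi : i ∈ I <;> simp [g, hi]
    _ = _ := by
        rw [← Fintype.prod_sum]
        refine prod_congr rfl fun i _ => ?_
        by_cases hi : i ∈ I <;> simp [g, hi, mul_sum, mul_comm]

theorem prod_eq_sum_finset_of_mix [CommRing R] {β : R} {μ μ' ν : Γ → R}
    (hmix : ∀ a, μ a = β * μ' a + (1 - β) * ν a) (x : ι → Γ) :
    ∏ i, μ (x i) =
      ∑ I : Finset ι, (1 - β) ^ #I * β ^ #Iᶜ * ∏ i, if i ∈ I then ν (x i) else μ' (x i) := by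
  have hx : ∀ i, μ (x i) = (1 - β) * ν (x i) + β * μ' (x i) := fun i => by rw [hmix, add_comm]
  simp_rw [hx, Fintype.prod_add, prod_mul_distrib, prod_const]
  refine sum_congr rfl fun I _ => ?_
  rw [prod_ite, filter_mem_eq_inter, univ_inter, filter_not, filter_mem_eq_inter, univ_inter,
    ← compl_eq_univ_sdiff]
  ring

end ProductSums

theorem norm_sum_smul_le_sum_mul_norm {α E : Type*} [SeminormedAddCommGroup E] [NormedSpace ℝ E]
    (s : Finset α) {w : α → ℝ} (hw : ∀ a ∈ s, 0 ≤ w a) (g : α → E) :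
    ‖∑ a ∈ s, w a • g a‖ ≤ ∑ a ∈ s, w a * ‖g a‖ :=
  (norm_sum_le _ _).trans_eq <| sum_congr rfl fun a ha => by
    rw [norm_smul, Real.norm_of_nonneg (hw a ha)]

theorem norm_prod_le_one {α 𝕜 : Type*} [NormedField 𝕜] (s : Finset α) {f : α → 𝕜}
    (hf : ∀ a ∈ s, ‖f a‖ ≤ 1) : ‖∏ a ∈ s, f a‖ ≤ 1 := by
  rw [norm_prod]
  exact prod_le_one (fun _ _ => norm_nonneg _) hf

theorem sum_mul_le_add_sum_mul_ite {α : Type*} (s : Finset α) {w g : α → ℝ}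
    (hw : ∀ a ∈ s, 0 ≤ w a) (hw1 : ∑ a ∈ s, w a ≤ 1) (hg : ∀ a ∈ s, g a ≤ 1) {δ : ℝ}
    (hδ : 0 ≤ δ) :
    ∑ a ∈ s, w a * g a ≤ δ + ∑ a ∈ s, w a * if δ ≤ g a then 1 else 0 := by
  calc ∑ a ∈ s, w a * g a ≤ ∑ a ∈ s, (δ * w a + w a * if δ ≤ g a then 1 else 0) := by
        refine sum_le_sum fun a ha => ?_
        have := hw a ha
        have := hg a ha
        split_ifs <;> nlinarith
    _ = δ * ∑ a ∈ s, w a + ∑ a ∈ s, w a * if δ ≤ g a then 1 else 0 := by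
        rw [sum_add_distrib, mul_sum]
    _ ≤ δ + ∑ a ∈ s, w a * if δ ≤ g a then 1 else 0 := by
        gcongr
        exact mul_le_of_le_one_right hδ hw1

section RandomRestriction
variable {ι Γ : Type*} [Fintype ι] [DecidableEq ι] [Fintype Γ]

/- A sum over `ι → Γ` stands for a sum over `Γ^I` (or `Γ^Iᶜ`): the remaining coordinates carry
the uniform weight `(card Γ)⁻¹`, which sums to `1`. -/
noncomputable def restrictionWeight (β : ℝ) (ν : Γ → ℝ) (I : Finset ι) (z : ι → Γ) : ℝ :=
  (1 - β) ^ #I * β ^ #Iᶜ * ∏ i, if i ∈ I then ν (z i) else (Fintype.card Γ : ℝ)⁻¹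

noncomputable def restrictedCorrelation (μ' : Γ → ℝ) (f : (ι → Γ) → ℂ) (P : ι → Γ → ℂ)
    (I : Finset ι) (z : ι → Γ) : ℂ :=
  ∑ x, (∏ i, if i ∈ I then (Fintype.card Γ : ℝ)⁻¹ else μ' (x i)) •
    (f (I.piecewise z x) * ∏ i ∈ Iᶜ, P i (x i))

theorem restrictionWeight_nonneg {β : ℝ} {ν : Γ → ℝ} (hβ0 : 0 ≤ β) (hβ1 : β ≤ 1)
    (hν0 : ∀ a, 0 ≤ ν a) (I : Finset ι) (z : ι → Γ) : 0 ≤ restrictionWeight β ν I z := by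
  have h1β : 0 ≤ 1 - β := sub_nonneg.2 hβ1
  refine mul_nonneg (by positivity) (prod_nonneg fun i _ => ?_)
  split_ifs
  exacts [hν0 _, by positivity]

theorem prod_mul_restrictedCorrelation (μ' : Γ → ℝ) (f : (ι → Γ) → ℂ) (P : ι → Γ → ℂ)
    (I : Finset ι) (z : ι → Γ) :
    (∏ i ∈ I, P i (z i)) * restrictedCorrelation μ' f P I z =
      ∑ x, (∏ i, if i ∈ I then (Fintype.card Γ : ℝ)⁻¹ else μ' (x i)) •
        (f (I.piecewise z x) * ∏ i, P i (I.piecewise z x i)) := by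
  rw [restrictedCorrelation, mul_sum]
  refine sum_congr rfl fun x _ => ?_
  have hI : ∏ i ∈ I, P i (I.piecewise z x i) = ∏ i ∈ I, P i (z i) :=
    prod_congr rfl fun i hi => by rw [I.piecewise_eq_of_mem z x hi]
  have hIc : ∏ i ∈ Iᶜ, P i (I.piecewise z x i) = ∏ i ∈ Iᶜ, P i (x i) :=
    prod_congr rfl fun i hi => by rw [I.piecewise_eq_of_notMem z x (mem_compl.1 hi)]
  rw [mul_smul_comm, ← prod_mul_prod_compl I fun i => P i (I.piecewise z x i), hI, hIc,
    mul_left_comm]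

variable [Nonempty Γ]

theorem sum_sum_restrictionWeight {β : ℝ} {ν : Γ → ℝ} (hν1 : ∑ a, ν a = 1) :
    ∑ I : Finset ι, ∑ z, restrictionWeight β ν I z = 1 := by
  have hz : ∀ I : Finset ι,
      ∑ z : ι → Γ, ∏ i, (if i ∈ I then ν (z i) else (Fintype.card Γ : ℝ)⁻¹) = 1 := fun I => by
    rw [← Fintype.prod_sum fun i s => if i ∈ I then ν s else (Fintype.card Γ : ℝ)⁻¹]
    refine prod_eq_one fun i _ => ?_
    split_ifs
    exacts [hν1, by simp]
  have hI := Fintype.prod_add (fun _ : ι => 1 - β) fun _ => β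
  simp only [sub_add_cancel, prod_const_one, prod_const] at hI
  simp only [restrictionWeight, ← mul_sum, hz, mul_one]
  exact hI.symm

theorem norm_restrictedCorrelation_le_one {μ' : Γ → ℝ} {f : (ι → Γ) → ℂ} {P : ι → Γ → ℂ}
    (hμ'0 : ∀ a, 0 ≤ μ' a) (hμ'1 : ∑ a, μ' a = 1) (hf : ∀ x, ‖f x‖ ≤ 1)
    (hP : ∀ i a, ‖P i a‖ ≤ 1) (I : Finset ι) (z : ι → Γ) :
    ‖restrictedCorrelation μ' f P I z‖ ≤ 1 := by
  have hw : ∀ x : ι → Γ, 0 ≤ ∏ i, if i ∈ I then (Fintype.card Γ : ℝ)⁻¹ else μ' (x i) :=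
    fun x => prod_nonneg fun i _ => by split_ifs <;> first | positivity | exact hμ'0 _
  calc ‖restrictedCorrelation μ' f P I z‖
      ≤ ∑ x : ι → Γ, (∏ i, if i ∈ I then (Fintype.card Γ : ℝ)⁻¹ else μ' (x i)) *
          ‖f (I.piecewise z x) * ∏ i ∈ Iᶜ, P i (x i)‖ :=
        norm_sum_smul_le_sum_mul_norm _ (fun x _ => hw x) _
    _ ≤ ∑ x : ι → Γ, ∏ i, if i ∈ I then (Fintype.card Γ : ℝ)⁻¹ else μ' (x i) := by
        refine sum_le_sum fun x _ => mul_le_of_le_one_right (hw x) ?_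
        rw [norm_mul]
        exact mul_le_one₀ (hf _) (norm_nonneg _) (norm_prod_le_one _ fun i _ => hP i _)
    _ = 1 := by
        rw [← Fintype.prod_sum fun i s => if i ∈ I then (Fintype.card Γ : ℝ)⁻¹ else μ' s]
        refine prod_eq_one fun i _ => ?_
        split_ifs
        exacts [by simp, hμ'1]

theorem sum_prod_smul_eq_sum_restrictionWeight_smul {M : Type*} [AddCommMonoid M] [Module ℝ M]
    {β : ℝ} {μ μ' ν : Γ → ℝ} (hmix : ∀ a, μ a = β * μ' a + (1 - β) * ν a) (F : (ι → Γ) → M) :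
    ∑ x, (∏ i, μ (x i)) • F x = ∑ I : Finset ι, ∑ z, restrictionWeight β ν I z •
      ∑ x, (∏ i, if i ∈ I then (Fintype.card Γ : ℝ)⁻¹ else μ' (x i)) • F (I.piecewise z x) := by
  simp_rw [prod_eq_sum_finset_of_mix hmix, sum_smul]
  rw [sum_comm]
  refine sum_congr rfl fun I _ => ?_
  calc ∑ x, ((1 - β) ^ #I * β ^ #Iᶜ * ∏ i, if i ∈ I then ν (x i) else μ' (x i)) • F x
      = ((1 - β) ^ #I * β ^ #Iᶜ) • ∑ x, (∏ i, if i ∈ I then ν (x i) else μ' (x i)) • F x := by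
        simp only [smul_sum, mul_smul]
    _ = ((1 - β) ^ #I * β ^ #Iᶜ) • ∑ z, ∑ x,
          ((∏ i, if i ∈ I then ν (z i) else (Fintype.card Γ : ℝ)⁻¹) *
            ∏ i, if i ∈ I then (Fintype.card Γ : ℝ)⁻¹ else μ' (x i)) • F (I.piecewise z x) := by
        rw [sum_sum_prod_mul_prod_smul_piecewise I
          (fun i s => if i ∈ I then ν s else (Fintype.card Γ : ℝ)⁻¹)
          (fun i s => if i ∈ I then (Fintype.card Γ : ℝ)⁻¹ else μ' s)]
        refine congrArg _ (sum_congr rfl fun u _ => congrArg (· • F u) ?_)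
        refine prod_congr rfl fun i _ => ?_
        by_cases hi : i ∈ I <;> simp [hi]
    _ = _ := by simp only [restrictionWeight, smul_sum, mul_smul]

theorem norm_correlation_le_sum_restrictionWeight_mul_norm {β : ℝ} {μ μ' ν : Γ → ℝ}
    {f : (ι → Γ) → ℂ} {P : ι → Γ → ℂ} (hβ0 : 0 ≤ β) (hβ1 : β ≤ 1) (hν0 : ∀ a, 0 ≤ ν a)
    (hmix : ∀ a, μ a = β * μ' a + (1 - β) * ν a) (hP : ∀ i a, ‖P i a‖ ≤ 1) :
    ‖∑ x, (∏ i, μ (x i)) • (f x * ∏ i, P i (x i))‖ ≤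
      ∑ I : Finset ι, ∑ z, restrictionWeight β ν I z * ‖restrictedCorrelation μ' f P I z‖ := by
  rw [sum_prod_smul_eq_sum_restrictionWeight_smul hmix]
  refine (norm_sum_le _ _).trans (sum_le_sum fun I _ => ?_)
  refine (norm_sum_smul_le_sum_mul_norm _ (fun z _ => restrictionWeight_nonneg hβ0 hβ1 hν0 I z)
    _).trans (sum_le_sum fun z _ => ?_)
  rw [← prod_mul_restrictedCorrelation, norm_mul]
  exact mul_le_mul_of_nonneg_left
    (mul_le_of_le_one_left (norm_nonneg _) (norm_prod_le_one _ fun i _ => hP i _))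
    (restrictionWeight_nonneg hβ0 hβ1 hν0 I z)

end RandomRestriction

theorem stmt2_general {Γ : Type} [Fintype Γ] [Nonempty Γ]
    (n : ℕ) (β ε : ℝ) (hβ0 : 0 ≤ β) (hβ1 : β ≤ 1) (hε : 0 < ε)
    (μ μ' ν : Γ → ℝ)
    (hμ'0 : ∀ a, 0 ≤ μ' a) (hμ'1 : ∑ a, μ' a = 1)
    (hν0 : ∀ a, 0 ≤ ν a) (hν1 : ∑ a, ν a = 1)
    (hmix : ∀ a, μ a = β * μ' a + (1 - β) * ν a)
    (f : (Fin n → Γ) → ℂ) (hf : ∀ x, norm (f x) ≤ 1)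
    (P : Fin n → Γ → ℂ) (hP : ∀ i a, norm (P i a) ≤ 1)
    (hcorr : ε ≤ norm (∑ x : Fin n → Γ,
      ((∏ i, μ (x i) : ℝ) : ℂ) * f x * ∏ i, P i (x i))) :
    ε / 2 ≤ ∑ I : Finset (Fin n), ∑ z : Fin n → Γ,
      ((1 - β) ^ I.card * β ^ (n - I.card)) *
        (∏ i, if i ∈ I then ν (z i) else ((Fintype.card Γ : ℝ))⁻¹) *
        (if ε / 2 ≤ norm (∑ x : Fin n → Γ,
            ((∏ i, if i ∈ I then ((Fintype.card Γ : ℝ))⁻¹ else μ' (x i) : ℝ) : ℂ) *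
              f (fun i => if i ∈ I then z i else x i) *
              ∏ i ∈ Iᶜ, P i (x i))
          then (1 : ℝ) else 0) := by
  have hcorr' : ε ≤ ∑ p : Finset (Fin n) × (Fin n → Γ),
      restrictionWeight β ν p.1 p.2 * ‖restrictedCorrelation μ' f P p.1 p.2‖ := by
    simp only [Fintype.sum_prod_type]
    refine hcorr.trans (le_of_eq_of_le ?_
      (norm_correlation_le_sum_restrictionWeight_mul_norm hβ0 hβ1 hν0 hmix hP))
    simp only [Complex.real_smul, mul_assoc]
  have hW1 : ∑ p : Finset (Fin n) × (Fin n → Γ), restrictionWeight β ν p.1 p.2 = 1 := by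
    simpa only [Fintype.sum_prod_type] using sum_sum_restrictionWeight hν1
  have haverage := sum_mul_le_add_sum_mul_ite univ
    (fun p _ => restrictionWeight_nonneg hβ0 hβ1 hν0 p.1 p.2) hW1.le
    (fun p _ => norm_restrictedCorrelation_le_one hμ'0 hμ'1 hf hP p.1 p.2) (half_pos hε).le
  have hhalf : ε / 2 ≤ ∑ p : Finset (Fin n) × (Fin n → Γ), restrictionWeight β ν p.1 p.2 *
      if ε / 2 ≤ ‖restrictedCorrelation μ' f P p.1 p.2‖ then 1 else 0 := by
    linarith
  simp only [Fintype.sum_prod_type, restrictionWeight, restrictedCorrelation, Complex.real_smul,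
    card_compl, Fintype.card_fin, mul_assoc] at hhalf ⊢
  exact hhalf

/-- if a 1-bounded f correlates (≥ ε) with a 1-bounded product function P
under μ^⊗n, and μ = β·μ' + (1−β)·ν, then with probability at least ε/2 over the random
restriction (I ∼_{1−β} [n], z ∼ ν^⊗I), the restricted function f_{I→z} correlates (≥ ε/2)
with P_{I→z} under (μ')^⊗Iᶜ. -/
theorem stmt2 {Γ : Type} [Fintype Γ] [DecidableEq Γ] [Nonempty Γ]
    (n : ℕ) (β ε : ℝ) (hβ0 : 0 ≤ β) (hβ1 : β ≤ 1) (hε : 0 < ε)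
    (μ μ' ν : Γ → ℝ)
    (hμ'0 : ∀ a, 0 ≤ μ' a) (hμ'1 : ∑ a, μ' a = 1)
    (hν0 : ∀ a, 0 ≤ ν a) (hν1 : ∑ a, ν a = 1)
    (hmix : ∀ a, μ a = β * μ' a + (1 - β) * ν a)
    (f : (Fin n → Γ) → ℂ) (hf : ∀ x, norm (f x) ≤ 1)
    (P : Fin n → Γ → ℂ) (hP : ∀ i a, norm (P i a) ≤ 1)
    (hcorr : ε ≤ norm (∑ x : Fin n → Γ,
      ((∏ i, μ (x i) : ℝ) : ℂ) * f x * ∏ i, P i (x i))) :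
    ε / 2 ≤ ∑ I : Finset (Fin n), ∑ z : Fin n → Γ,
      ((1 - β) ^ I.card * β ^ (n - I.card)) *
        (∏ i, if i ∈ I then ν (z i) else ((Fintype.card Γ : ℝ))⁻¹) *
        (if ε / 2 ≤ norm (∑ x : Fin n → Γ,
            ((∏ i, if i ∈ I then ((Fintype.card Γ : ℝ))⁻¹ else μ' (x i) : ℝ) : ℂ) *
              f (fun i => if i ∈ I then z i else x i) *
              ∏ i ∈ Iᶜ, P i (x i))
          then (1 : ℝ) else 0) :=
  stmt2_general n β ε hβ0 hβ1 hε μ μ' ν hμ'0 hμ'1 hν0 hν1 hmix f hf P hP hcorr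
end

section
/- Let μ be the uniform distribution on {0,1}×{0,1}, and suppose a 1-bounded function g: {0,1}^n → ℝ satisfies E_{(x,x')∼ρ^⊗n}[g(x)g(x')] ≥ 4γ for a coordinatewise distribution ρ on {0,1}×{0,1} with full support, written as ρ = β·μ + (1−β)·ρ' with β > 0. Then E_{I∼_{1−β}[n]} E_{(z,z')∼(ρ')^⊗I} |E_{x uniform on {0,1}^{Iᶜ}}[g_{I→z}(x)]| ≥ 4γ, where I includes each coordinate independently with probability 1−β. -/
open Finset

lemma selSum {n : ℕ} (I : Finset (Fin n)) (f : (Fin n → Fin 2) → ℝ) :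
    ∑ z : Fin n → Fin 2, ∑ x : Fin n → Fin 2,
      f (fun i => if i ∈ I then z i else x i) = (2:ℝ) ^ n * ∑ u : Fin n → Fin 2, f u := by
  have h0 : (∑ z : Fin n → Fin 2, ∑ x : Fin n → Fin 2,
      f (fun i => if i ∈ I then z i else x i))
      = ∑ p : (Fin n → Fin 2) × (Fin n → Fin 2),
        f (fun i => if i ∈ I then p.1 i else p.2 i) :=
    (Fintype.sum_prod_type (fun p : (Fin n → Fin 2) × (Fin n → Fin 2) =>
      f (fun i => if i ∈ I then p.1 i else p.2 i))).symm
  rw [h0]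
  let e : ((Fin n → Fin 2) × (Fin n → Fin 2)) ≃ ((Fin n → Fin 2) × (Fin n → Fin 2)) :=
    { toFun := fun p => (fun i => if i ∈ I then p.1 i else p.2 i,
                         fun i => if i ∈ I then p.2 i else p.1 i),
      invFun := fun p => (fun i => if i ∈ I then p.1 i else p.2 i,
                          fun i => if i ∈ I then p.2 i else p.1 i),
      left_inv := by
        intro p
        refine Prod.ext ?_ ?_ <;> funext i <;> by_cases h : i ∈ I <;> simp [h]
      right_inv := by
        intro p
        refine Prod.ext ?_ ?_ <;> funext i <;> by_cases h : i ∈ I <;> simp [h] }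
  have h := Equiv.sum_comp e (fun p : (Fin n → Fin 2) × (Fin n → Fin 2) => f p.1)
  simp only [e, Equiv.coe_fn_mk] at h
  rw [h, Fintype.sum_prod_type]
  simp [Finset.sum_const, Fintype.card_fun]
  rw [← Finset.mul_sum]

lemma selSum2 {n : ℕ} (I : Finset (Fin n))
    (H : (Fin n → Fin 2) → (Fin n → Fin 2) → ℝ) :
    ∑ z : Fin n → Fin 2, ∑ z' : Fin n → Fin 2, ∑ x : Fin n → Fin 2, ∑ x' : Fin n → Fin 2,
      H (fun i => if i ∈ I then z i else x i) (fun i => if i ∈ I then z' i else x' i)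
    = (2:ℝ) ^ n * ((2:ℝ) ^ n *
        ∑ u : Fin n → Fin 2, ∑ v : Fin n → Fin 2, H u v) := by
  calc ∑ z : Fin n → Fin 2, ∑ z' : Fin n → Fin 2, ∑ x : Fin n → Fin 2, ∑ x' : Fin n → Fin 2,
        H (fun i => if i ∈ I then z i else x i) (fun i => if i ∈ I then z' i else x' i)
      = ∑ z : Fin n → Fin 2, ∑ x : Fin n → Fin 2, ∑ z' : Fin n → Fin 2, ∑ x' : Fin n → Fin 2,
        H (fun i => if i ∈ I then z i else x i) (fun i => if i ∈ I then z' i else x' i) := by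
        exact Finset.sum_congr rfl fun z _ => Finset.sum_comm
    _ = ∑ z : Fin n → Fin 2, ∑ x : Fin n → Fin 2,
        (2:ℝ) ^ n * ∑ v : Fin n → Fin 2, H (fun i => if i ∈ I then z i else x i) v := by
        exact Finset.sum_congr rfl fun z _ => Finset.sum_congr rfl fun x _ =>
          selSum I (fun v => H (fun i => if i ∈ I then z i else x i) v)
    _ = (2:ℝ) ^ n * ∑ v : Fin n → Fin 2, ∑ z : Fin n → Fin 2, ∑ x : Fin n → Fin 2,
        H (fun i => if i ∈ I then z i else x i) v := by
        simp_rw [← Finset.mul_sum]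
        congr 1
        rw [show (∑ z : Fin n → Fin 2, ∑ x : Fin n → Fin 2, ∑ v : Fin n → Fin 2,
            H (fun i => if i ∈ I then z i else x i) v)
          = ∑ z : Fin n → Fin 2, ∑ v : Fin n → Fin 2, ∑ x : Fin n → Fin 2,
            H (fun i => if i ∈ I then z i else x i) v from
          Finset.sum_congr rfl fun z _ => Finset.sum_comm, Finset.sum_comm]
    _ = (2:ℝ) ^ n * ∑ v : Fin n → Fin 2, (2:ℝ) ^ n * ∑ u : Fin n → Fin 2, H u v := by
        congr 1
        exact Finset.sum_congr rfl fun v _ => selSum I (fun u => H u v)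
    _ = (2:ℝ) ^ n * ((2:ℝ) ^ n * ∑ u : Fin n → Fin 2, ∑ v : Fin n → Fin 2, H u v) := by
        rw [← Finset.mul_sum, Finset.sum_comm]

lemma restrict_id {n : ℕ} (I : Finset (Fin n)) (ρ' : Fin 2 × Fin 2 → ℝ)
    (g : (Fin n → Fin 2) → ℝ) :
    ∑ z : Fin n → Fin 2, ∑ z' : Fin n → Fin 2,
      (∏ i, if i ∈ I then ρ' (z i, z' i) else (1/4:ℝ)) *
        ((∑ x : Fin n → Fin 2, ((2:ℝ)^n)⁻¹ * g (fun i => if i ∈ I then z i else x i)) *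
         (∑ x : Fin n → Fin 2, ((2:ℝ)^n)⁻¹ * g (fun i => if i ∈ I then z' i else x i)))
    = ∑ u : Fin n → Fin 2, ∑ v : Fin n → Fin 2,
      ((1/4:ℝ)^(n - I.card) * ∏ i ∈ I, ρ' (u i, v i)) * (g u * g v) := by
  have hsplit : ∀ z z' : Fin n → Fin 2,
      (∏ i, if i ∈ I then ρ' (z i, z' i) else (1/4:ℝ))
      = (1/4:ℝ)^(n - I.card) * ∏ i ∈ I, ρ' (z i, z' i) := by
    intro z z'
    rw [Finset.prod_ite]
    have h1 : Finset.univ.filter (fun i => i ∈ I) = I := by ext i; simp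
    have h2 : Finset.univ.filter (fun i : Fin n => ¬ i ∈ I) = Iᶜ := by ext i; simp
    rw [h1, h2, Finset.prod_const, Finset.card_compl, Fintype.card_fin, mul_comm]
  set c : ℝ := ((2:ℝ)^n)⁻¹ with hc
  set k : ℕ := n - I.card with hk
  have step1 : ∀ z z' : Fin n → Fin 2,
      (∏ i, if i ∈ I then ρ' (z i, z' i) else (1/4:ℝ)) *
        ((∑ x : Fin n → Fin 2, c * g (fun i => if i ∈ I then z i else x i)) *
         (∑ x : Fin n → Fin 2, c * g (fun i => if i ∈ I then z' i else x i)))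
      = ((1/4:ℝ)^k * (c * c)) *
          ∑ x : Fin n → Fin 2, ∑ x' : Fin n → Fin 2,
            (∏ i ∈ I, ρ' ((fun i => if i ∈ I then z i else x i) i,
                           (fun i => if i ∈ I then z' i else x' i) i)) *
              (g (fun i => if i ∈ I then z i else x i) *
               g (fun i => if i ∈ I then z' i else x' i)) := by
    intro z z'
    have hrepl : ∀ x x' : Fin n → Fin 2,
        (∏ i ∈ I, ρ' ((fun i => if i ∈ I then z i else x i) i,
                       (fun i => if i ∈ I then z' i else x' i) i))
        = ∏ i ∈ I, ρ' (z i, z' i) := by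
      intro x x'
      exact Finset.prod_congr rfl fun i hi => by simp [hi]
    simp_rw [hrepl]
    rw [hsplit z z', ← Finset.mul_sum, ← Finset.mul_sum]
    simp_rw [← Finset.mul_sum, ← Finset.sum_mul]
    ring
  calc ∑ z : Fin n → Fin 2, ∑ z' : Fin n → Fin 2,
        (∏ i, if i ∈ I then ρ' (z i, z' i) else (1/4:ℝ)) *
          ((∑ x : Fin n → Fin 2, c * g (fun i => if i ∈ I then z i else x i)) *
           (∑ x : Fin n → Fin 2, c * g (fun i => if i ∈ I then z' i else x i)))
      = ∑ z : Fin n → Fin 2, ∑ z' : Fin n → Fin 2, ((1/4:ℝ)^k * (c * c)) *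
          ∑ x : Fin n → Fin 2, ∑ x' : Fin n → Fin 2,
            (∏ i ∈ I, ρ' ((fun i => if i ∈ I then z i else x i) i,
                           (fun i => if i ∈ I then z' i else x' i) i)) *
              (g (fun i => if i ∈ I then z i else x i) *
               g (fun i => if i ∈ I then z' i else x' i)) := by
        exact Finset.sum_congr rfl fun z _ => Finset.sum_congr rfl fun z' _ => step1 z z'
    _ = ((1/4:ℝ)^k * (c * c)) *
          ∑ z : Fin n → Fin 2, ∑ z' : Fin n → Fin 2,
          ∑ x : Fin n → Fin 2, ∑ x' : Fin n → Fin 2,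
            (∏ i ∈ I, ρ' ((fun i => if i ∈ I then z i else x i) i,
                           (fun i => if i ∈ I then z' i else x' i) i)) *
              (g (fun i => if i ∈ I then z i else x i) *
               g (fun i => if i ∈ I then z' i else x' i)) := by
        simp_rw [← Finset.mul_sum]
    _ = ((1/4:ℝ)^k * (c * c)) * ((2:ℝ)^n * ((2:ℝ)^n *
          ∑ u : Fin n → Fin 2, ∑ v : Fin n → Fin 2,
            (∏ i ∈ I, ρ' (u i, v i)) * (g u * g v))) := by
        rw [selSum2 I (fun u v => (∏ i ∈ I, ρ' (u i, v i)) * (g u * g v))]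
    _ = (1/4:ℝ)^k * ((c * (2:ℝ)^n) * ((c * (2:ℝ)^n) *
          ∑ u : Fin n → Fin 2, ∑ v : Fin n → Fin 2,
            (∏ i ∈ I, ρ' (u i, v i)) * (g u * g v))) := by ring
    _ = ∑ u : Fin n → Fin 2, ∑ v : Fin n → Fin 2,
          ((1/4:ℝ)^k * ∏ i ∈ I, ρ' (u i, v i)) * (g u * g v) := by
        rw [hc, inv_mul_cancel₀ (by positivity : ((2:ℝ)^n) ≠ 0), one_mul, one_mul]
        simp_rw [Finset.mul_sum, mul_assoc]

/-- if a 1-bounded g : {0,1}^n → ℝ has E_{(x,x')∼ρ^⊗n}[g(x)g(x')] ≥ 4γ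
for a full-support coordinatewise distribution ρ = β·uniform + (1−β)·ρ' on {0,1}²,
then after the random restriction (I ∼_{1−β} [n], (z,z') ∼ (ρ')^⊗I), the expected
absolute average of g_{I→z} over uniform x on the remaining coordinates is ≥ 4γ. -/
theorem stmt7 (n : ℕ) (β γ : ℝ) (hβ0 : 0 < β) (hβ1 : β ≤ 1)
    (ρ ρ' : Fin 2 × Fin 2 → ℝ)
    (hρfull : ∀ a, 0 < ρ a) (hρ1 : ∑ a, ρ a = 1)
    (hρ'0 : ∀ a, 0 ≤ ρ' a) (hρ'1 : ∑ a, ρ' a = 1)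
    (hmix : ∀ a, ρ a = β * (1 / 4) + (1 - β) * ρ' a)
    (g : (Fin n → Fin 2) → ℝ) (hg : ∀ x, |g x| ≤ 1)
    (hcorr : 4 * γ ≤ ∑ x : Fin n → Fin 2, ∑ x' : Fin n → Fin 2,
      (∏ i, ρ (x i, x' i)) * (g x * g x')) :
    4 * γ ≤ ∑ I : Finset (Fin n), ∑ z : Fin n → Fin 2, ∑ z' : Fin n → Fin 2,
      ((1 - β) ^ I.card * β ^ (n - I.card)) *
        (∏ i, if i ∈ I then ρ' (z i, z' i) else (1 / 4 : ℝ)) *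
        |∑ x : Fin n → Fin 2,
          ((2 : ℝ) ^ n)⁻¹ * g (fun i => if i ∈ I then z i else x i)| := by
  classical
  -- Step 1: mixture decomposition of the product
  have prodmix : ∀ x x' : Fin n → Fin 2, (∏ i, ρ (x i, x' i))
      = ∑ I : Finset (Fin n), ((1 - β) ^ I.card * β ^ (n - I.card)) *
          ((1/4:ℝ) ^ (n - I.card) * ∏ i ∈ I, ρ' (x i, x' i)) := by
    intro x x'
    have h : ∀ i : Fin n, ρ (x i, x' i)
        = (1 - β) * ρ' (x i, x' i) + β * (1 / 4) := fun i => by rw [hmix]; ring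
    simp_rw [h]
    rw [Finset.prod_add, Finset.powerset_univ]
    refine Finset.sum_congr rfl fun I _ => ?_
    rw [Finset.prod_mul_distrib, Finset.prod_const, Finset.prod_const]
    have hcard : (Finset.univ \ I).card = n - I.card := by
      rw [Finset.sdiff_eq_inter_compl, Finset.univ_inter, Finset.card_compl,
        Fintype.card_fin]
    rw [hcard]
    ring
  -- Step 2: the key identity
  have key : (∑ x : Fin n → Fin 2, ∑ x' : Fin n → Fin 2,
        (∏ i, ρ (x i, x' i)) * (g x * g x'))
      = ∑ I : Finset (Fin n), ∑ z : Fin n → Fin 2, ∑ z' : Fin n → Fin 2,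
        ((1 - β) ^ I.card * β ^ (n - I.card)) *
          ((∏ i, if i ∈ I then ρ' (z i, z' i) else (1 / 4 : ℝ)) *
            ((∑ x : Fin n → Fin 2, ((2:ℝ)^n)⁻¹ * g (fun i => if i ∈ I then z i else x i)) *
             (∑ x : Fin n → Fin 2, ((2:ℝ)^n)⁻¹ * g (fun i => if i ∈ I then z' i else x i)))) := by
    calc ∑ x : Fin n → Fin 2, ∑ x' : Fin n → Fin 2,
          (∏ i, ρ (x i, x' i)) * (g x * g x')
        = ∑ x : Fin n → Fin 2, ∑ x' : Fin n → Fin 2, ∑ I : Finset (Fin n),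
            ((1 - β) ^ I.card * β ^ (n - I.card)) *
              (((1/4:ℝ) ^ (n - I.card) * ∏ i ∈ I, ρ' (x i, x' i)) * (g x * g x')) := by
          refine Finset.sum_congr rfl fun x _ => Finset.sum_congr rfl fun x' _ => ?_
          rw [prodmix x x', Finset.sum_mul]
          exact Finset.sum_congr rfl fun I _ => by ring
      _ = ∑ I : Finset (Fin n), ∑ x : Fin n → Fin 2, ∑ x' : Fin n → Fin 2,
            ((1 - β) ^ I.card * β ^ (n - I.card)) *
              (((1/4:ℝ) ^ (n - I.card) * ∏ i ∈ I, ρ' (x i, x' i)) * (g x * g x')) := by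
          rw [show (∑ x : Fin n → Fin 2, ∑ x' : Fin n → Fin 2, ∑ I : Finset (Fin n),
              ((1 - β) ^ I.card * β ^ (n - I.card)) *
                (((1/4:ℝ) ^ (n - I.card) * ∏ i ∈ I, ρ' (x i, x' i)) * (g x * g x')))
            = ∑ x : Fin n → Fin 2, ∑ I : Finset (Fin n), ∑ x' : Fin n → Fin 2,
              ((1 - β) ^ I.card * β ^ (n - I.card)) *
                (((1/4:ℝ) ^ (n - I.card) * ∏ i ∈ I, ρ' (x i, x' i)) * (g x * g x')) from
            Finset.sum_congr rfl fun x _ => Finset.sum_comm, Finset.sum_comm]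
      _ = ∑ I : Finset (Fin n), ((1 - β) ^ I.card * β ^ (n - I.card)) *
            ∑ x : Fin n → Fin 2, ∑ x' : Fin n → Fin 2,
              ((1/4:ℝ) ^ (n - I.card) * ∏ i ∈ I, ρ' (x i, x' i)) * (g x * g x') := by
          simp_rw [← Finset.mul_sum]
      _ = ∑ I : Finset (Fin n), ((1 - β) ^ I.card * β ^ (n - I.card)) *
            ∑ z : Fin n → Fin 2, ∑ z' : Fin n → Fin 2,
              (∏ i, if i ∈ I then ρ' (z i, z' i) else (1/4:ℝ)) *
                ((∑ x : Fin n → Fin 2, ((2:ℝ)^n)⁻¹ * g (fun i => if i ∈ I then z i else x i)) *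
                 (∑ x : Fin n → Fin 2, ((2:ℝ)^n)⁻¹ * g (fun i => if i ∈ I then z' i else x i))) := by
          exact Finset.sum_congr rfl fun I _ => by rw [restrict_id I ρ' g]
      _ = _ := by simp_rw [Finset.mul_sum]
  -- Step 3: termwise bound
  refine le_trans hcorr (le_of_eq_of_le key ?_)
  refine Finset.sum_le_sum fun I _ => Finset.sum_le_sum fun z _ =>
    Finset.sum_le_sum fun z' _ => ?_
  have habs : ∀ w : Fin n → Fin 2,
      |∑ x : Fin n → Fin 2, ((2:ℝ)^n)⁻¹ * g (fun i => if i ∈ I then w i else x i)| ≤ 1 := by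
    intro w
    calc |∑ x : Fin n → Fin 2, ((2:ℝ)^n)⁻¹ * g (fun i => if i ∈ I then w i else x i)|
        ≤ ∑ x : Fin n → Fin 2, |((2:ℝ)^n)⁻¹ * g (fun i => if i ∈ I then w i else x i)| :=
          Finset.abs_sum_le_sum_abs _ _
      _ ≤ ∑ _x : Fin n → Fin 2, ((2:ℝ)^n)⁻¹ := by
          refine Finset.sum_le_sum fun x _ => ?_
          rw [abs_mul, abs_of_nonneg (by positivity : (0:ℝ) ≤ ((2:ℝ)^n)⁻¹)]
          calc ((2:ℝ)^n)⁻¹ * |g _| ≤ ((2:ℝ)^n)⁻¹ * 1 :=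
                mul_le_mul_of_nonneg_left (hg _) (by positivity)
            _ = ((2:ℝ)^n)⁻¹ := mul_one _
      _ = 1 := by
          rw [Finset.sum_const, Finset.card_univ, Fintype.card_fun, Fintype.card_fin,
            Fintype.card_fin, nsmul_eq_mul]
          push_cast
          rw [mul_inv_cancel₀ (by positivity : ((2:ℝ)^n) ≠ 0)]
  have hw0 : 0 ≤ ((1 - β) ^ I.card * β ^ (n - I.card)) *
      (∏ i, if i ∈ I then ρ' (z i, z' i) else (1 / 4 : ℝ)) := by
    refine mul_nonneg (mul_nonneg (pow_nonneg (by linarith) _) (pow_nonneg hβ0.le _)) ?_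
    refine Finset.prod_nonneg fun i _ => ?_
    split
    · exact hρ'0 _
    · norm_num
  have hmain : (∑ x : Fin n → Fin 2, ((2:ℝ)^n)⁻¹ * g (fun i => if i ∈ I then z i else x i)) *
        (∑ x : Fin n → Fin 2, ((2:ℝ)^n)⁻¹ * g (fun i => if i ∈ I then z' i else x i))
      ≤ |∑ x : Fin n → Fin 2, ((2:ℝ)^n)⁻¹ * g (fun i => if i ∈ I then z i else x i)| := by
    calc _ ≤ |(∑ x : Fin n → Fin 2, ((2:ℝ)^n)⁻¹ * g (fun i => if i ∈ I then z i else x i)) *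
        (∑ x : Fin n → Fin 2, ((2:ℝ)^n)⁻¹ * g (fun i => if i ∈ I then z' i else x i))| :=
          le_abs_self _
      _ = |∑ x : Fin n → Fin 2, ((2:ℝ)^n)⁻¹ * g (fun i => if i ∈ I then z i else x i)| *
          |∑ x : Fin n → Fin 2, ((2:ℝ)^n)⁻¹ * g (fun i => if i ∈ I then z' i else x i)| :=
          abs_mul _ _
      _ ≤ _ * 1 := mul_le_mul_of_nonneg_left (habs z') (abs_nonneg _)
      _ = _ := mul_one _
  calc ((1 - β) ^ I.card * β ^ (n - I.card)) *
        ((∏ i, if i ∈ I then ρ' (z i, z' i) else (1 / 4 : ℝ)) *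
          ((∑ x : Fin n → Fin 2, ((2:ℝ)^n)⁻¹ * g (fun i => if i ∈ I then z i else x i)) *
           (∑ x : Fin n → Fin 2, ((2:ℝ)^n)⁻¹ * g (fun i => if i ∈ I then z' i else x i))))
      = (((1 - β) ^ I.card * β ^ (n - I.card)) *
          (∏ i, if i ∈ I then ρ' (z i, z' i) else (1 / 4 : ℝ))) *
          ((∑ x : Fin n → Fin 2, ((2:ℝ)^n)⁻¹ * g (fun i => if i ∈ I then z i else x i)) *
           (∑ x : Fin n → Fin 2, ((2:ℝ)^n)⁻¹ * g (fun i => if i ∈ I then z' i else x i))) := by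
        ring
    _ ≤ (((1 - β) ^ I.card * β ^ (n - I.card)) *
          (∏ i, if i ∈ I then ρ' (z i, z' i) else (1 / 4 : ℝ))) *
          |∑ x : Fin n → Fin 2, ((2:ℝ)^n)⁻¹ * g (fun i => if i ∈ I then z i else x i)| :=
        mul_le_mul_of_nonneg_left hmain hw0
end
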